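/- (sup inf R ≥ 0.) Let f ∈ L¹(μ) be positive on T\{0} and h = f·II(f) with h_0 = 0, i.e., h_i = Σ_{k∈P(i)} (1/(μ_k q_{kk*})) Σ_{j∈T_k} μ_j f_j. Set w̄_i = h_i/h_{i*}. Then R_i(w̄) = f_i/h_i > 0 for all i ∈ T\{0}, hence sup_{w∈W} inf_{i∈T\{0}} R_i(w) ≥ 0. -/

import Mathlib

open Finset
open scoped Classical

structure BDTree (V : Type*) [Fintype V] where
  root : V
  parent : V → V
  layer : V → ℕ
  q : V → V → ℝ
  parent_root : parent root = root
  layer_root : layer root = 0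
  layer_parent : ∀ i, i ≠ root → layer i = layer (parent i) + 1
  reach : ∀ i, ∃ n, parent^[n] i = root
  q_pos_up : ∀ i, i ≠ root → 0 < q i (parent i)
  q_pos_down : ∀ i, i ≠ root → 0 < q (parent i) i

namespace BDTree

variable {V : Type*} [Fintype V] (T : BDTree V)

/-- The set of sons of a vertex. -/
noncomputable def sons (i : V) : Finset V :=
  Finset.univ.filter fun j => j ≠ T.root ∧ T.parent j = i

/-- The subtree `T_k` rooted at `k` (including `k`). -/
noncomputable def subtree (k : V) : Finset V :=
  Finset.univ.filter fun j => ∃ n, T.parent^[n] j = k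

/-- The path set `P(i)`: vertices (excluding the root) on the path from `i` to the root. -/
noncomputable def pathSet (i : V) : Finset V :=
  Finset.univ.filter fun k => k ≠ T.root ∧ ∃ n, T.parent^[n] i = k

/-- The symmetric measure `μ`. -/
noncomputable def mu (k : V) : ℝ :=
  ∏ j ∈ T.pathSet k, T.q (T.parent j) j / T.q j (T.parent j)

/-- The operator `Ω`. -/
noncomputable def Omega (g : V → ℝ) (i : V) : ℝ :=
  (∑ j ∈ T.sons i, T.q i j * (g j - g i)) + T.q i (T.parent i) * (g (T.parent i) - g i)

/-- The set of non-root vertices `T \ {0}`. -/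
noncomputable def nonroot : Finset V := Finset.univ.filter fun i => i ≠ T.root

/-- The Dirichlet form `D(f)`. -/
noncomputable def D (f : V → ℝ) : ℝ :=
  ∑ i ∈ T.nonroot, T.mu i * T.q i (T.parent i) * (f i - f (T.parent i)) ^ 2

/-- `μ(f²)`. -/
noncomputable def norm2 (f : V → ℝ) : ℝ := ∑ i ∈ T.nonroot, T.mu i * f i ^ 2

/-- The principal Dirichlet eigenvalue `λ₀`, via the classical variational formula. -/
noncomputable def lam0 : ℝ := sInf {r | ∃ f : V → ℝ, f T.root = 0 ∧ T.norm2 f = 1 ∧ r = T.D f}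

/-- The single-summation operator `I`. -/
noncomputable def opI (f : V → ℝ) (i : V) : ℝ :=
  (∑ j ∈ T.subtree i, T.mu j * f j) /
    (T.mu i * T.q i (T.parent i) * (f i - f (T.parent i)))

/-- The double-summation operator `II`. -/
noncomputable def opII (f : V → ℝ) (i : V) : ℝ :=
  (∑ k ∈ T.pathSet i, (1 / (T.mu k * T.q k (T.parent k))) *
      ∑ j ∈ T.subtree k, T.mu j * f j) / f i

/-- The difference-form operator `R`; at a son of the root the convention `w_0 = ∞`,
`1/∞ = 0` is used, i.e. the term `w i⁻¹` is replaced by `0`. -/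
noncomputable def R (w : V → ℝ) (i : V) : ℝ :=
  T.q i (T.parent i) * (1 - (if T.parent i = T.root then 0 else (w i)⁻¹)) +
    ∑ j ∈ T.sons i, T.q i j * (1 - w j)

/-- Membership in the test-function class `W = {w : w > 1, w_0 = ∞}` (the value at a son
of the root plays the role of `∞` and is not used by `R`). -/
def memW (w : V → ℝ) : Prop := ∀ i, i ≠ T.root → T.parent i ≠ T.root → 1 < w i

/-- `φ_j = Σ_{k∈P(j)} 1/(μ_k q_{kk*})`. -/
noncomputable def phi (j : V) : ℝ :=
  ∑ k ∈ T.pathSet j, 1 / (T.mu k * T.q k (T.parent k))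

end BDTree

/-! The potential `h = f·II(f)` vanishes at the root and increases along each edge by
`h_i - h_{i*} = S_i / (μ_i q_{ii*})`, where `S_i = Σ_{j∈T_i} μ_j f_j`. Since
`S_i = μ_i f_i + Σ_{j∈J(i)} S_j`, the symmetry `μ_j q_{jj*} = μ_{j*} q_{j*j}` makes
the increments around `i` telescope to `-Ωh(i) = f_i`. For `w̄ = h / h∘parent` one has
`R_i(w̄) h_i = -Ωh(i)`, so `R_i(w̄) = f_i / h_i > 0`; and `w̄ > 1` because `h` increases
away from the root, so `w̄ ∈ W`. -/

namespace BDTree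

variable {V : Type*} [Fintype V] (T : BDTree V)

lemma iterate_parent_root (n : ℕ) : T.parent^[n] T.root = T.root :=
  Function.iterate_fixed T.parent_root n

lemma layer_parent_le (j : V) : T.layer (T.parent j) ≤ T.layer j := by
  by_cases hj : j = T.root
  · rw [hj, T.parent_root]
  · rw [T.layer_parent j hj]
    omega

lemma layer_iterate_parent_le (n : ℕ) (j : V) : T.layer (T.parent^[n] j) ≤ T.layer j := by
  induction n with
  | zero => rfl
  | succ n ih =>
    rw [Function.iterate_succ_apply']
    exact (T.layer_parent_le _).trans ih

lemma iterate_parent_ne_of_parent_eq {i c : V} (hc : c ≠ T.root) (hci : T.parent c = i)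
    (n : ℕ) : T.parent^[n] i ≠ c := by
  intro hn
  have hle := T.layer_iterate_parent_le n i
  rw [hn, T.layer_parent c hc, hci] at hle
  omega

lemma mem_pathSet_iff {i k : V} :
    k ∈ T.pathSet i ↔ k ≠ T.root ∧ ∃ n, T.parent^[n] i = k := by
  simp [pathSet]

lemma ne_root_of_mem_pathSet {i k : V} (hk : k ∈ T.pathSet i) : k ≠ T.root :=
  (T.mem_pathSet_iff.1 hk).1

lemma mem_pathSet_self {i : V} (hi : i ≠ T.root) : i ∈ T.pathSet i :=
  T.mem_pathSet_iff.2 ⟨hi, 0, rfl⟩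

lemma pathSet_root : T.pathSet T.root = ∅ := by
  ext k
  simp only [mem_pathSet_iff, Finset.notMem_empty, iff_false, not_and]
  rintro hk ⟨n, hn⟩
  exact hk (by rw [← hn, T.iterate_parent_root])

lemma self_notMem_pathSet_parent {i : V} (hi : i ≠ T.root) : i ∉ T.pathSet (T.parent i) := by
  rw [mem_pathSet_iff]
  rintro ⟨-, n, hn⟩
  exact T.iterate_parent_ne_of_parent_eq hi rfl n hn

lemma pathSet_eq_insert_parent {i : V} (hi : i ≠ T.root) :
    T.pathSet i = insert i (T.pathSet (T.parent i)) := by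
  ext k
  simp only [mem_pathSet_iff, Finset.mem_insert]
  constructor
  · rintro ⟨hk, _ | n, hn⟩
    · exact Or.inl hn.symm
    · exact Or.inr ⟨hk, n, by rwa [Function.iterate_succ_apply] at hn⟩
  · rintro (rfl | ⟨hk, n, hn⟩)
    · exact ⟨hi, 0, rfl⟩
    · exact ⟨hk, n + 1, by rwa [Function.iterate_succ_apply]⟩

lemma mem_subtree_iff {k j : V} : j ∈ T.subtree k ↔ ∃ n, T.parent^[n] j = k := by
  simp [subtree]

lemma mem_subtree_self (k : V) : k ∈ T.subtree k :=
  T.mem_subtree_iff.2 ⟨0, rfl⟩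

lemma ne_root_of_mem_subtree {k j : V} (hk : k ≠ T.root) (hj : j ∈ T.subtree k) :
    j ≠ T.root := by
  rintro rfl
  obtain ⟨n, hn⟩ := T.mem_subtree_iff.1 hj
  exact hk (by rw [← hn, T.iterate_parent_root])

lemma mem_sons_iff {i c : V} : c ∈ T.sons i ↔ c ≠ T.root ∧ T.parent c = i := by
  simp [sons]

lemma subtree_eq_insert_biUnion_sons {i : V} (hi : i ≠ T.root) :
    T.subtree i = insert i ((T.sons i).biUnion T.subtree) := by
  ext j
  simp only [mem_subtree_iff, Finset.mem_insert, Finset.mem_biUnion, mem_sons_iff]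
  constructor
  · rintro ⟨_ | n, hn⟩
    · exact Or.inl hn
    · rw [Function.iterate_succ_apply'] at hn
      refine Or.inr ⟨T.parent^[n] j, ⟨fun hr => hi ?_, hn⟩, n, rfl⟩
      rw [← hn, hr, T.parent_root]
  · rintro (rfl | ⟨c, ⟨-, hci⟩, n, hn⟩)
    · exact ⟨0, rfl⟩
    · exact ⟨n + 1, by rw [Function.iterate_succ_apply', hn, hci]⟩

lemma self_notMem_biUnion_sons {i : V} : i ∉ (T.sons i).biUnion T.subtree := by
  simp only [Finset.mem_biUnion, mem_sons_iff, not_exists, not_and]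
  rintro c ⟨hc, hci⟩ hi
  obtain ⟨n, hn⟩ := T.mem_subtree_iff.1 hi
  exact T.iterate_parent_ne_of_parent_eq hc hci n hn

lemma eq_of_iterate_parent_eq_son {i c c' : V} (hci : T.parent c = i) (hc' : c' ∈ T.sons i)
    {n : ℕ} (hn : T.parent^[n] c = c') : c = c' := by
  obtain ⟨hc'root, hc'i⟩ := T.mem_sons_iff.1 hc'
  cases n with
  | zero => exact hn
  | succ n =>
    rw [Function.iterate_succ_apply, hci] at hn
    exact absurd hn (T.iterate_parent_ne_of_parent_eq hc'root hc'i n)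

lemma pairwiseDisjoint_subtree_sons (i : V) :
    (T.sons i : Set V).PairwiseDisjoint T.subtree := by
  intro c hc c' hc' hne
  rw [Function.onFun, Finset.disjoint_left]
  intro j hj hj'
  obtain ⟨n, hn⟩ := T.mem_subtree_iff.1 hj
  obtain ⟨m, hm⟩ := T.mem_subtree_iff.1 hj'
  rcases le_total n m with hnm | hmn
  · refine hne (T.eq_of_iterate_parent_eq_son (T.mem_sons_iff.1 hc).2 hc' (n := m - n) ?_)
    rw [← hn, ← Function.iterate_add_apply, Nat.sub_add_cancel hnm, hm]
  · refine hne (T.eq_of_iterate_parent_eq_son (T.mem_sons_iff.1 hc').2 hc (n := n - m) ?_).symm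
    rw [← hm, ← Function.iterate_add_apply, Nat.sub_add_cancel hmn, hn]

lemma mu_pos (k : V) : 0 < T.mu k :=
  Finset.prod_pos fun j hj =>
    have hj := T.ne_root_of_mem_pathSet hj
    div_pos (T.q_pos_down j hj) (T.q_pos_up j hj)

lemma mu_mul_q_parent {j : V} (hj : j ≠ T.root) :
    T.mu j * T.q j (T.parent j) = T.mu (T.parent j) * T.q (T.parent j) j := by
  rw [mu, T.pathSet_eq_insert_parent hj, Finset.prod_insert (T.self_notMem_pathSet_parent hj),
    ← mu]
  field_simp [(T.q_pos_up j hj).ne']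

/-- The convention `w_0 = ∞` built into `R` is what `h_0 = 0` gives at the sons of the root. -/
lemma R_div_parent_mul_self {h : V → ℝ} (hroot : h T.root = 0) {i : V} (hi : h i ≠ 0) :
    T.R (fun j => h j / h (T.parent j)) i * h i = -T.Omega h i := by
  have hup : (1 - (if T.parent i = T.root then 0 else (h i / h (T.parent i))⁻¹)) * h i =
      h i - h (T.parent i) := by
    split_ifs with hp
    · rw [hp, hroot]
      ring
    · rw [inv_div]
      field_simp
  have hdown : ∀ c ∈ T.sons i,
      T.q i c * (1 - h c / h (T.parent c)) * h i = -(T.q i c * (h c - h i)) := by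
    intro c hc
    rw [(T.mem_sons_iff.1 hc).2]
    field_simp
    ring
  rw [R, Omega, add_mul, Finset.sum_mul, Finset.sum_congr rfl hdown, mul_assoc, hup,
    Finset.sum_neg_distrib]
  ring

variable (f : V → ℝ)

noncomputable def subtreeMass (k : V) : ℝ :=
  ∑ j ∈ T.subtree k, T.mu j * f j

noncomputable def potential (i : V) : ℝ :=
  ∑ k ∈ T.pathSet i, (1 / (T.mu k * T.q k (T.parent k))) * T.subtreeMass f k

lemma subtreeMass_eq_add_sum_sons {i : V} (hi : i ≠ T.root) :
    T.subtreeMass f i = T.mu i * f i + ∑ c ∈ T.sons i, T.subtreeMass f c := by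
  rw [subtreeMass, T.subtree_eq_insert_biUnion_sons hi,
    Finset.sum_insert T.self_notMem_biUnion_sons,
    Finset.sum_biUnion (T.pairwiseDisjoint_subtree_sons i)]
  rfl

lemma potential_root : T.potential f T.root = 0 := by
  rw [potential, T.pathSet_root, Finset.sum_empty]

lemma potential_sub_potential_parent {i : V} (hi : i ≠ T.root) :
    T.potential f i - T.potential f (T.parent i) =
      T.subtreeMass f i / (T.mu i * T.q i (T.parent i)) := by
  rw [potential, potential, T.pathSet_eq_insert_parent hi,
    Finset.sum_insert (T.self_notMem_pathSet_parent hi)]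
  ring

theorem neg_Omega_potential {i : V} (hi : i ≠ T.root) : -T.Omega (T.potential f) i = f i := by
  have hmu := (T.mu_pos i).ne'
  have hup : T.q i (T.parent i) * (T.potential f (T.parent i) - T.potential f i) =
      -(T.subtreeMass f i / T.mu i) := by
    rw [← neg_sub, T.potential_sub_potential_parent f hi]
    field_simp [(T.q_pos_up i hi).ne']
  have hdown : ∀ c ∈ T.sons i, T.q i c * (T.potential f c - T.potential f i) =
      T.subtreeMass f c / T.mu i := by
    intro c hc
    obtain ⟨hcr, rfl⟩ := T.mem_sons_iff.1 hc
    rw [T.potential_sub_potential_parent f hcr, T.mu_mul_q_parent hcr]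
    field_simp [(T.q_pos_down c hcr).ne']
  rw [Omega, Finset.sum_congr rfl hdown, hup, T.subtreeMass_eq_add_sum_sons f hi,
    ← Finset.sum_div]
  field_simp
  ring

variable {f}

lemma subtreeMass_pos (hf : ∀ i, i ≠ T.root → 0 < f i) {k : V} (hk : k ≠ T.root) :
    0 < T.subtreeMass f k :=
  Finset.sum_pos (fun j hj => mul_pos (T.mu_pos j) (hf j (T.ne_root_of_mem_subtree hk hj)))
    ⟨k, T.mem_subtree_self k⟩

lemma potential_pos (hf : ∀ i, i ≠ T.root → 0 < f i) {i : V} (hi : i ≠ T.root) :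
    0 < T.potential f i := by
  refine Finset.sum_pos (fun k hk => ?_) ⟨i, T.mem_pathSet_self hi⟩
  have hk := T.ne_root_of_mem_pathSet hk
  exact mul_pos (one_div_pos.2 (mul_pos (T.mu_pos k) (T.q_pos_up k hk))) (T.subtreeMass_pos hf hk)

lemma potential_parent_lt (hf : ∀ i, i ≠ T.root → 0 < f i) {i : V} (hi : i ≠ T.root) :
    T.potential f (T.parent i) < T.potential f i := by
  have hinc := T.potential_sub_potential_parent f hi
  have : 0 < T.subtreeMass f i / (T.mu i * T.q i (T.parent i)) :=
    div_pos (T.subtreeMass_pos hf hi) (mul_pos (T.mu_pos i) (T.q_pos_up i hi))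
  linarith

lemma memW_potential_div_parent (hf : ∀ i, i ≠ T.root → 0 < f i) :
    T.memW fun j => T.potential f j / T.potential f (T.parent j) :=
  fun _ hi hp => (one_lt_div (T.potential_pos hf hp)).2 (T.potential_parent_lt hf hi)

theorem R_potential_div_parent (hf : ∀ i, i ≠ T.root → 0 < f i) {i : V} (hi : i ≠ T.root) :
    T.R (fun j => T.potential f j / T.potential f (T.parent j)) i = f i / T.potential f i := by
  have hpos := T.potential_pos hf hi
  rw [eq_div_iff hpos.ne', T.R_div_parent_mul_self (T.potential_root f) hpos.ne',
    T.neg_Omega_potential f hi]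

end BDTree

/-- with `h = f·II(f)` and `w̄ = h/h∘parent`, `R_i(w̄) = f_i/h_i > 0`;
hence `sup_{w∈W} inf_i R_i(w) ≥ 0`. -/
theorem stmt17 {V : Type*} [Fintype V] (T : BDTree V) (hne : T.nonroot.Nonempty)
    (f : V → ℝ) (hfpos : ∀ i, i ≠ T.root → 0 < f i) (h : V → ℝ)
    (hh : ∀ i, h i = ∑ k ∈ T.pathSet i,
        (1 / (T.mu k * T.q k (T.parent k))) * ∑ j ∈ T.subtree k, T.mu j * f j) :
    (∀ i, i ≠ T.root →
        T.R (fun j => h j / h (T.parent j)) i = f i / h i ∧ 0 < f i / h i) ∧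
    0 ≤ sSup {x | ∃ w, T.memW w ∧ x = T.nonroot.inf' hne fun i => T.R w i} := by
  obtain rfl : h = T.potential f := funext hh
  have hR : ∀ i, i ≠ T.root →
      T.R (fun j => T.potential f j / T.potential f (T.parent j)) i = f i / T.potential f i ∧
        0 < f i / T.potential f i :=
    fun i hi =>
      ⟨T.R_potential_div_parent hfpos hi, div_pos (hfpos i hi) (T.potential_pos hfpos hi)⟩
  refine ⟨hR, Real.sSup_nonneg' ⟨_, ⟨_, T.memW_potential_div_parent hfpos, rfl⟩, ?_⟩⟩
  refine ((Finset.lt_inf'_iff hne).2 fun i hi => ?_).le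
  obtain ⟨hRi, hpos⟩ := hR i (Finset.mem_filter.1 hi).2
  exact hRi ▸ hpos
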